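/- arXiv:1101.2236 — 2 statements merged into one kernel-verified Lean document; each statement's English description precedes it below -/
import Mathlib

section
/- Let C = B/A where A(z) = Σ_{i≥0} ((6i)!/((3i)!(2i)!))·(z/72)^i and B(z) = Σ_{i≥0} ((6i)!/((3i)!(2i)!))·((6i+1)/(6i−1))·(z/72)^i. Then C satisfies the Riccati equation 12z²·C' = 1 + 4z·C − C². -/
open PowerSeries

/-- `A(z) = Σ_{i≥0} ((6i)!/((3i)!(2i)!)) (z/72)^i`. -/
noncomputable def hgA : PowerSeries ℚ :=
  PowerSeries.mk fun i =>
    ((6 * i).factorial : ℚ) / (((3 * i).factorial : ℚ) * ((2 * i).factorial : ℚ)) / 72 ^ i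

/-- `B(z) = Σ_{i≥0} ((6i)!/((3i)!(2i)!))·((6i+1)/(6i−1)) (z/72)^i`. -/
noncomputable def hgB : PowerSeries ℚ :=
  PowerSeries.mk fun i =>
    ((6 * i).factorial : ℚ) / (((3 * i).factorial : ℚ) * ((2 * i).factorial : ℚ)) *
      ((6 * (i : ℚ) + 1) / (6 * (i : ℚ) - 1)) / 72 ^ i

/-- `C = B/A`. -/
noncomputable def hgC : PowerSeries ℚ := hgB * hgA⁻¹

/-!
The coefficients `a i` of `A` satisfy `6 (i + 1) a (i + 1) = (6 i + 1) (6 i + 5) a i`, which is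
the hypergeometric differential equation `36 z² A'' + (72 z − 6) A' + 5 A = 0`, and the same
recurrence shows `B = 12 z² A' + (2 z − 1) A`. Hence `C = 12 z² A'/A + 2 z − 1` is an affine
transform of the logarithmic derivative of a solution of a second-order linear equation, and such a
logarithmic derivative satisfies a Riccati equation.
-/

namespace PowerSeries

variable {R : Type*}

theorem coeff_X_mul_derivative [CommSemiring R] (f : R⟦X⟧) (n : ℕ) :
    coeff n (X * d⁄dX R f) = n * coeff n f := by
  cases n with
  | zero => simp
  | succ n => rw [coeff_succ_X_mul, coeff_derivative, mul_comm, Nat.cast_succ]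

theorem coeff_X_sq_mul_derivative_derivative [CommRing R] (f : R⟦X⟧) (n : ℕ) :
    coeff n (X ^ 2 * d⁄dX R (d⁄dX R f)) = n * (n - 1) * coeff n f := by
  have h : X ^ 2 * d⁄dX R (d⁄dX R f) = X * d⁄dX R (X * d⁄dX R f) - X * d⁄dX R f := by
    rw [Derivation.leibniz, derivative_X, smul_eq_mul, smul_eq_mul]; ring
  rw [h, map_sub, coeff_X_mul_derivative, coeff_X_mul_derivative]
  ring

theorem coeff_ofNat_mul [Semiring R] (m : ℕ) [m.AtLeastTwo] (f : R⟦X⟧) (n : ℕ) :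
    coeff n (ofNat(m) * f) = ofNat(m) * coeff n f := by
  rw [← map_ofNat C, coeff_C_mul]

theorem derivative_ofNat [CommSemiring R] (m : ℕ) [m.AtLeastTwo] :
    d⁄dX R (ofNat(m) : R⟦X⟧) = 0 := by
  rw [← map_ofNat C, derivative_C]

end PowerSeries

theorem coeff_hgA (n : ℕ) : coeff n hgA =
    ((6 * n).factorial : ℚ) / (((3 * n).factorial : ℚ) * ((2 * n).factorial : ℚ)) / 72 ^ n :=
  coeff_mk _ _

theorem coeff_hgB (n : ℕ) :
    coeff n hgB = (6 * (n : ℚ) + 1) / (6 * (n : ℚ) - 1) * coeff n hgA := by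
  rw [hgB, coeff_mk, coeff_hgA]; ring

theorem constantCoeff_hgA : constantCoeff hgA = 1 := by
  simp [← coeff_zero_eq_constantCoeff_apply, coeff_hgA]

theorem coeff_hgA_succ (n : ℕ) :
    6 * ((n : ℚ) + 1) * coeff (n + 1) hgA = (6 * n + 1) * (6 * n + 5) * coeff n hgA := by
  rw [coeff_hgA, coeff_hgA, show 6 * (n + 1) = 6 * n + 5 + 1 by ring,
    show 3 * (n + 1) = 3 * n + 2 + 1 by ring, show 2 * (n + 1) = 2 * n + 1 + 1 by ring]
  simp only [Nat.factorial_succ]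
  push_cast
  field_simp
  ring

theorem hgA_ode :
    36 * X ^ 2 * d⁄dX ℚ (d⁄dX ℚ hgA) + (72 * X - 6) * d⁄dX ℚ hgA + 5 * hgA = 0 := by
  ext n
  have h := coeff_hgA_succ n
  simp only [mul_assoc, sub_mul, map_add, map_sub, coeff_ofNat_mul,
    coeff_X_sq_mul_derivative_derivative, coeff_X_mul_derivative, coeff_derivative, map_zero]
  linear_combination -h

theorem hgB_eq : hgB = 12 * X ^ 2 * d⁄dX ℚ hgA + (2 * X - 1) * hgA := by
  ext n
  rw [pow_two, sub_mul, mul_assoc, mul_assoc, mul_assoc]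
  rcases n with _ | n
  · simp [coeff_hgB, constantCoeff_hgA]
  · have h := coeff_hgA_succ n
    simp only [map_add, map_sub, coeff_ofNat_mul, coeff_succ_X_mul, coeff_X_mul_derivative,
      one_mul, coeff_hgB]
    have hne : 6 * ((n + 1 : ℕ) : ℚ) - 1 ≠ 0 := by
      push_cast; linarith [n.cast_nonneg (α := ℚ)]
    rw [div_mul_eq_mul_div, div_eq_iff hne]
    push_cast
    linear_combination 2 * h

/-- `C` satisfies the Riccati equation `12z²·C' = 1 + 4z·C − C²`. -/
theorem hgC_riccati :
    12 * PowerSeries.X ^ 2 * PowerSeries.derivative ℚ hgC =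
      1 + 4 * PowerSeries.X * hgC - hgC ^ 2 := by
  have hA : constantCoeff hgA ≠ 0 := constantCoeff_hgA ▸ one_ne_zero
  have hAC : hgA * hgC = 12 * X ^ 2 * d⁄dX ℚ hgA + (2 * X - 1) * hgA := by
    rw [hgC, mul_left_comm, PowerSeries.mul_inv_cancel _ hA, mul_one, hgB_eq]
  have hAC' := congrArg (d⁄dX ℚ) hAC
  simp only [Derivation.leibniz, map_add, map_sub, smul_eq_mul, derivative_X, derivative_ofNat,
    derivative_one, pow_two] at hAC'
  refine mul_left_cancel₀ (pow_ne_zero 2 (ne_of_apply_ne constantCoeff (by simpa using hA))) ?_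
  linear_combination 12 * X ^ 2 * hgA * hAC' + (hgA * hgC - (2 * X + 1) * hgA) * hAC +
    4 * X ^ 2 * hgA * hgA_ode
end

section
/- The function Σ_{i≥0} ((6i)!/((3i)!(2i)!(2i+1)!!))·((6i+1)/(6i−1))·(t²/216)^i equals −(3/(4t))·sin((4/3)·arcsin(t)) as a power series identity in t. -/
/-!
Let `bₙ` be given by `b₀ = 0`, `b₁ = a` and `(n + 1)(n + 2) b_{n+2} = (n² - a²) bₙ`. The ratio
`|b_{n+2} / bₙ|` is eventually at most `1`, so `(bₙ)` is bounded and `S t = ∑ bₙ tⁿ` may be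
differentiated termwise on `(-1, 1)`; the recursion says precisely that
`(1 - t²) S'' - t S' + a² S = 0`. Substituting `t = sin θ` turns this into `y'' = -a² y`, so
`y θ = S (sin θ) - sin (a θ)` solves it with `y 0 = y' 0 = 0`; conservation of `y'² + a² y²` then
forces `y = 0`, i.e. `S t = sin (a arcsin t)`. For `a = 4/3` only odd powers occur, and comparing
ratios of consecutive coefficients identifies `b_{2i+1}` with `-(4/3) cᵢ / 216ⁱ`, where `cᵢ` is the
coefficient of `(t² / 216)ⁱ` in the theorem.
-/

open Nat

noncomputable def powerSeriesIterDeriv (b : ℕ → ℝ) (k : ℕ) (x : ℝ) : ℝ :=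
  ∑' n, b n * (n.descFactorial k * x ^ (n - k))

theorem powerSeriesIterDeriv_apply_zero (b : ℕ → ℝ) (k : ℕ) :
    powerSeriesIterDeriv b k 0 = k ! * b k := by
  rw [powerSeriesIterDeriv, tsum_eq_single k fun n hn => ?_]
  · simp [Nat.descFactorial_self, mul_comm]
  rcases hn.lt_or_gt with hlt | hgt
  · simp [Nat.descFactorial_of_lt hlt]
  · simp [zero_pow (Nat.sub_ne_zero_of_lt hgt)]

theorem hasDerivAt_descFactorial_mul_pow (n k : ℕ) (y : ℝ) :
    HasDerivAt (fun y : ℝ => (n.descFactorial k : ℝ) * y ^ (n - k))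
      (n.descFactorial (k + 1) * y ^ (n - (k + 1))) y := by
  refine ((hasDerivAt_pow (n - k) y).const_mul (n.descFactorial k : ℝ)).congr_deriv ?_
  rw [Nat.descFactorial_succ, Nat.sub_add_eq, Nat.cast_mul]
  ring

theorem pow_mul_descFactorial_mul_pow (x : ℝ) (n k : ℕ) :
    x ^ k * (n.descFactorial k * x ^ (n - k)) = n.descFactorial k * x ^ n := by
  rcases le_or_gt k n with hkn | hnk
  · rw [mul_left_comm, ← pow_add, Nat.add_sub_cancel' hkn]
  · simp [Nat.descFactorial_of_lt hnk]

section BoundedCoefficients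

variable {b : ℕ → ℝ} {C : ℝ}

theorem abs_mul_descFactorial_mul_pow_le (hb : ∀ n, |b n| ≤ C) (k n : ℕ) {r y : ℝ}
    (hr : 0 < r) (hr₁ : r ≤ 1) (hy : |y| ≤ r) :
    |b n * (n.descFactorial k * y ^ (n - k))| ≤ C / r ^ k * (n ^ k * r ^ n) := by
  have hC : 0 ≤ C := (abs_nonneg _).trans (hb 0)
  have hpow : |y| ^ (n - k) ≤ r ^ n / r ^ k := by
    rw [le_div_iff₀ (by positivity)]
    calc |y| ^ (n - k) * r ^ k ≤ r ^ (n - k) * r ^ k := by gcongr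
      _ = r ^ (n - k + k) := (pow_add _ _ _).symm
      _ ≤ r ^ n := pow_le_pow_of_le_one hr.le hr₁ (by omega)
  rw [abs_mul, abs_mul, abs_pow, Nat.abs_cast]
  calc |b n| * (n.descFactorial k * |y| ^ (n - k)) ≤ C * (n ^ k * (r ^ n / r ^ k)) := by
        gcongr
        exacts [hb n, mod_cast Nat.descFactorial_le_pow n k]
    _ = C / r ^ k * (n ^ k * r ^ n) := by ring

theorem summable_descFactorial_bound (k : ℕ) {r : ℝ} (hr : 0 < r) (hr₁ : r < 1) :
    Summable fun n : ℕ => C / r ^ k * (n ^ k * r ^ n) := by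
  have hr' : ‖r‖ < 1 := by rwa [Real.norm_eq_abs, abs_of_pos hr]
  exact (summable_pow_mul_geometric_of_norm_lt_one k hr').mul_left _

theorem summable_mul_descFactorial_mul_pow (hb : ∀ n, |b n| ≤ C) (k : ℕ) {x : ℝ}
    (hx : |x| < 1) : Summable fun n => b n * (n.descFactorial k * x ^ (n - k)) := by
  obtain ⟨r, hxr, hr₁⟩ := exists_between hx
  have hr : 0 < r := (abs_nonneg x).trans_lt hxr
  exact .of_norm_bounded (summable_descFactorial_bound k hr hr₁) fun n =>
    abs_mul_descFactorial_mul_pow_le hb k n hr hr₁.le hxr.le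

theorem hasDerivAt_powerSeriesIterDeriv (hb : ∀ n, |b n| ≤ C) (k : ℕ) {x : ℝ}
    (hx : |x| < 1) :
    HasDerivAt (powerSeriesIterDeriv b k) (powerSeriesIterDeriv b (k + 1) x) x := by
  obtain ⟨r, hxr, hr₁⟩ := exists_between hx
  have hr : 0 < r := (abs_nonneg x).trans_lt hxr
  have hball : ∀ {y : ℝ}, y ∈ Metric.ball 0 r ↔ |y| < r := by
    simp
  exact hasDerivAt_tsum_of_isPreconnected (summable_descFactorial_bound (k + 1) hr hr₁)
    Metric.isOpen_ball (convex_ball 0 r).isPreconnected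
    (fun n y _ => (hasDerivAt_descFactorial_mul_pow n k y).const_mul (b n))
    (fun n y hy => abs_mul_descFactorial_mul_pow_le hb (k + 1) n hr hr₁.le (hball.1 hy).le)
    (hball.2 hxr) (summable_mul_descFactorial_mul_pow hb k hx) (hball.2 hxr)

theorem hasSum_powerSeriesIterDeriv (hb : ∀ n, |b n| ≤ C) (k : ℕ) {x : ℝ} (hx : |x| < 1) :
    HasSum (fun n => b n * (n.descFactorial k * x ^ (n - k))) (powerSeriesIterDeriv b k x) :=
  (summable_mul_descFactorial_mul_pow hb k hx).hasSum

end BoundedCoefficients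

theorem IsOpen.eqOn_zero_of_hasDerivAt_harmonic {s : Set ℝ} (hs : IsOpen s)
    (hs' : IsPreconnected s) {a x₀ : ℝ} {f f' : ℝ → ℝ}
    (hf : ∀ x ∈ s, HasDerivAt f (f' x) x) (hf' : ∀ x ∈ s, HasDerivAt f' (-a ^ 2 * f x) x)
    (hx₀ : x₀ ∈ s) (hf₀ : f x₀ = 0) (hf'₀ : f' x₀ = 0) : Set.EqOn f 0 s := by
  have hconst {g : ℝ → ℝ} (hg : ∀ x ∈ s, HasDerivAt g 0 x) (hg₀ : g x₀ = 0) :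
      ∀ x ∈ s, g x = 0 := fun x hx =>
    hg₀ ▸ hs.is_const_of_deriv_eq_zero hs'
      (fun y hy => (hg y hy).differentiableAt.differentiableWithinAt)
      (fun y hy => (hg y hy).deriv) hx hx₀
  -- the energy `f'² + a² f²` is conserved, so `f' = 0` on `s`
  have henergy : ∀ x ∈ s, f' x ^ 2 + a ^ 2 * f x ^ 2 = 0 := by
    refine hconst (fun x hx => ?_) (by simp [hf₀, hf'₀])
    refine (((hf' x hx).pow 2).add (((hf x hx).pow 2).const_mul (a ^ 2))).congr_deriv ?_
    ring
  refine hconst (fun x hx => ?_) hf₀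
  have : f' x = 0 := by nlinarith [henergy x hx, sq_nonneg (a * f x), sq_nonneg (f' x)]
  exact this ▸ hf x hx

noncomputable def sinArcsinCoeff (a : ℝ) : ℕ → ℝ
  | 0 => 0
  | 1 => a
  | n + 2 => sinArcsinCoeff a n * ((n : ℝ) ^ 2 - a ^ 2) / ((n + 1) * (n + 2))

theorem sinArcsinCoeff_add_two_mul (a : ℝ) (n : ℕ) :
    sinArcsinCoeff a (n + 2) * ((n + 1) * (n + 2)) = sinArcsinCoeff a n * (n ^ 2 - a ^ 2) :=
  div_mul_cancel₀ _ (by positivity)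

theorem exists_forall_abs_le_of_abs_add_two_le {b : ℕ → ℝ} (N : ℕ)
    (h : ∀ n ≥ N, |b (n + 2)| ≤ |b n|) : ∃ C, ∀ n, |b n| ≤ C := by
  refine ⟨∑ m ∈ Finset.range (N + 2), |b m|, fun n => ?_⟩
  induction n using Nat.strong_induction_on with
  | _ n ih =>
    rcases lt_or_ge n (N + 2) with hn | hn
    · exact Finset.single_le_sum (fun m _ => abs_nonneg (b m)) (Finset.mem_range.2 hn)
    · obtain ⟨m, rfl⟩ : ∃ m, n = m + 2 := ⟨n - 2, by omega⟩
      exact (h m (by omega)).trans (ih m (by omega))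

theorem exists_forall_abs_sinArcsinCoeff_le (a : ℝ) : ∃ C, ∀ n, |sinArcsinCoeff a n| ≤ C := by
  refine exists_forall_abs_le_of_abs_add_two_le ⌈a ^ 2⌉₊ fun n hn => ?_
  have ha : a ^ 2 ≤ n := (Nat.le_ceil _).trans (by exact_mod_cast hn)
  have hpos : (0 : ℝ) < (n + 1) * (n + 2) := by positivity
  rw [sinArcsinCoeff, abs_div, abs_mul, abs_of_pos hpos, div_le_iff₀ hpos]
  gcongr
  rw [abs_le]
  constructor <;> nlinarith

theorem powerSeriesIterDeriv_sinArcsinCoeff_ode (a : ℝ) {t : ℝ} (ht : |t| < 1) :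
    (1 - t ^ 2) * powerSeriesIterDeriv (sinArcsinCoeff a) 2 t -
      t * powerSeriesIterDeriv (sinArcsinCoeff a) 1 t +
      a ^ 2 * powerSeriesIterDeriv (sinArcsinCoeff a) 0 t = 0 := by
  obtain ⟨C, hC⟩ := exists_forall_abs_sinArcsinCoeff_le a
  set b := sinArcsinCoeff a
  have h₀ := hasSum_powerSeriesIterDeriv hC 0 ht
  have h₁ := hasSum_powerSeriesIterDeriv hC 1 ht
  have h₂ := hasSum_powerSeriesIterDeriv hC 2 ht
  have h₂' : HasSum (fun n => b (n + 2) * ((n + 1) * (n + 2) * t ^ n))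
      (powerSeriesIterDeriv b 2 t) := by
    rw [← hasSum_nat_add_iff' 2] at h₂
    simpa [Finset.sum_range_succ] using h₂
  have hsum :=
    ((h₂'.sub (h₂.mul_left (t ^ 2))).sub (h₁.mul_left (t ^ 1))).add (h₀.mul_left (a ^ 2))
  have hterm (n : ℕ) : b (n + 2) * ((n + 1) * (n + 2) * t ^ n) -
      t ^ 2 * (b n * (n.descFactorial 2 * t ^ (n - 2))) -
      t ^ 1 * (b n * (n.descFactorial 1 * t ^ (n - 1))) +
      a ^ 2 * (b n * (n.descFactorial 0 * t ^ (n - 0))) = 0 := by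
    rw [mul_left_comm (t ^ 2), pow_mul_descFactorial_mul_pow, mul_left_comm (t ^ 1),
      pow_mul_descFactorial_mul_pow, cast_descFactorial_two, descFactorial_one, descFactorial_zero,
      Nat.sub_zero, Nat.cast_one]
    linear_combination t ^ n * sinArcsinCoeff_add_two_mul a n
  simp only [hterm] at hsum
  linear_combination hsum.unique hasSum_zero

open Real in
theorem powerSeriesIterDeriv_sinArcsinCoeff_sin (a : ℝ) {θ : ℝ}
    (hθ : θ ∈ Set.Ioo (-(π / 2)) (π / 2)) :
    powerSeriesIterDeriv (sinArcsinCoeff a) 0 (sin θ) = sin (a * θ) := by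
  obtain ⟨C, hC⟩ := exists_forall_abs_sinArcsinCoeff_le a
  set S := powerSeriesIterDeriv (sinArcsinCoeff a)
  have habs_sin {θ : ℝ} (hθ : θ ∈ Set.Ioo (-(π / 2)) (π / 2)) : |sin θ| < 1 := by
    rw [← sq_lt_one_iff_abs_lt_one, sin_sq]
    nlinarith [cos_pos_of_mem_Ioo hθ]
  have hS (k : ℕ) {θ : ℝ} (hθ : θ ∈ Set.Ioo (-(π / 2)) (π / 2)) :
      HasDerivAt (fun θ => S k (sin θ)) (S (k + 1) (sin θ) * cos θ) θ :=
    (hasDerivAt_powerSeriesIterDeriv hC k (habs_sin hθ)).comp θ (hasDerivAt_sin θ)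
  have hlin (θ : ℝ) : HasDerivAt (fun θ => a * θ) a θ := by
    simpa using (hasDerivAt_id θ).const_mul a
  refine sub_eq_zero.1 <| isOpen_Ioo.eqOn_zero_of_hasDerivAt_harmonic isPreconnected_Ioo
    (a := a) (x₀ := 0) (f := fun θ => S 0 (sin θ) - sin (a * θ))
    (f' := fun θ => S 1 (sin θ) * cos θ - a * cos (a * θ))
    (fun θ hθ => ?_) (fun θ hθ => ?_) ⟨by linarith [pi_pos], by linarith [pi_pos]⟩ ?_ ?_ hθ
  · exact ((hS 0 hθ).sub (hlin θ).sin).congr_deriv (by ring)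
  · refine (((hS 1 hθ).mul (hasDerivAt_cos θ)).sub ((hlin θ).cos.const_mul a)).congr_deriv ?_
    linear_combination powerSeriesIterDeriv_sinArcsinCoeff_ode a (habs_sin hθ) +
      S 2 (sin θ) * cos_sq' θ
  · simp [S, powerSeriesIterDeriv_apply_zero, sinArcsinCoeff]
  · simp [S, powerSeriesIterDeriv_apply_zero, sinArcsinCoeff]

open Real in
theorem hasSum_sinArcsinCoeff (a : ℝ) {t : ℝ} (ht : |t| < 1) :
    HasSum (fun n => sinArcsinCoeff a n * t ^ n) (sin (a * arcsin t)) := by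
  obtain ⟨C, hC⟩ := exists_forall_abs_sinArcsinCoeff_le a
  obtain ⟨ht₁, ht₂⟩ := abs_lt.1 ht
  have hmem : arcsin t ∈ Set.Ioo (-(π / 2)) (π / 2) :=
    ⟨neg_pi_div_two_lt_arcsin.2 ht₁, arcsin_lt_pi_div_two.2 ht₂⟩
  rw [← powerSeriesIterDeriv_sinArcsinCoeff_sin a hmem, sin_arcsin ht₁.le ht₂.le]
  simpa using hasSum_powerSeriesIterDeriv hC 0 ht

theorem sinArcsinCoeff_two_mul (a : ℝ) (i : ℕ) : sinArcsinCoeff a (2 * i) = 0 := by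
  induction i with
  | zero => rfl
  | succ i ih => rw [Nat.mul_succ, sinArcsinCoeff, ih, zero_mul, zero_div]

theorem hasSum_sinArcsinCoeff_odd (a : ℝ) {t : ℝ} (ht : |t| < 1) :
    HasSum (fun i => sinArcsinCoeff a (2 * i + 1) * t ^ (2 * i + 1))
      (Real.sin (a * Real.arcsin t)) := by
  have hinj : Function.Injective fun i : ℕ => 2 * i + 1 := fun i j h => by simpa using h
  refine (hinj.hasSum_iff fun n hn => ?_).2 (hasSum_sinArcsinCoeff a ht)
  obtain ⟨i, rfl⟩ : Even n := Nat.not_odd_iff_even.1 fun ⟨i, hi⟩ => hn ⟨i, hi.symm⟩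
  rw [← two_mul, sinArcsinCoeff_two_mul, zero_mul]

noncomputable def sinFourThirdsCoeff (i : ℕ) : ℝ :=
  ((6 * i).factorial : ℝ) /
      (((3 * i).factorial : ℝ) * ((2 * i).factorial : ℝ) * ((2 * i + 1)‼ : ℝ)) *
    ((6 * (i : ℝ) + 1) / (6 * (i : ℝ) - 1))

theorem sinFourThirdsCoeff_succ (i : ℕ) :
    sinFourThirdsCoeff (i + 1) * ((2 * i + 2) * (2 * i + 3)) =
      216 * sinFourThirdsCoeff i * ((2 * i + 1) ^ 2 - (4 / 3) ^ 2) := by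
  have hden (j : ℕ) : 6 * (j : ℝ) - 1 ≠ 0 := by
    intro h
    have : (6 * j : ℝ) = 1 := by linarith
    norm_cast at this
    omega
  unfold sinFourThirdsCoeff
  rw [show 6 * (i + 1) = 6 * i + 6 by ring, show 3 * (i + 1) = 3 * i + 3 by ring,
    show 2 * (i + 1) + 1 = 2 * i + 1 + 2 by ring, show 2 * (i + 1) = 2 * i + 2 by ring]
  simp only [Nat.factorial_succ, Nat.doubleFactorial_add_two]
  have := hden (i + 1)
  push_cast at this ⊢
  field_simp [hden i]
  ring

theorem sinArcsinCoeff_four_thirds_odd (i : ℕ) :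
    sinArcsinCoeff (4 / 3) (2 * i + 1) = -(4 / 3) * sinFourThirdsCoeff i / 216 ^ i := by
  induction i with
  | zero => norm_num [sinArcsinCoeff, sinFourThirdsCoeff]
  | succ i ih =>
    have hrec := sinFourThirdsCoeff_succ i
    rw [show 2 * (i + 1) + 1 = 2 * i + 1 + 2 by ring, sinArcsinCoeff, ih,
      eq_div_of_mul_eq (by positivity) hrec]
    push_cast
    field_simp
    ring

/-- `Σ_{i≥0} ((6i)!/((3i)!(2i)!(2i+1)!!))·((6i+1)/(6i−1))·(t²/216)^i
= −(3/(4t))·sin((4/3)·arcsin t)` for `|t| < 1`, with the right side extended to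
`t = 0` by its limit `−1`. -/
theorem sine_identity' (t : ℝ) (ht : |t| < 1) :
    HasSum
      (fun i : ℕ =>
        ((6 * i).factorial : ℝ) /
            (((3 * i).factorial : ℝ) * ((2 * i).factorial : ℝ) * ((2 * i + 1)‼ : ℝ)) *
          ((6 * (i : ℝ) + 1) / (6 * (i : ℝ) - 1)) * (t ^ 2 / 216) ^ i)
      (if t = 0 then -1 else -(3 / (4 * t)) * Real.sin (4 / 3 * Real.arcsin t)) := by
  change HasSum (fun i => sinFourThirdsCoeff i * (t ^ 2 / 216) ^ i) _
  rcases eq_or_ne t 0 with rfl | ht₀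
  · rw [if_pos rfl]
    convert hasSum_single (f := fun i => sinFourThirdsCoeff i * ((0 : ℝ) ^ 2 / 216) ^ i) 0
      fun i hi => by simp [hi] using 1
    norm_num [sinFourThirdsCoeff]
  · rw [if_neg ht₀]
    refine ((hasSum_sinArcsinCoeff_odd (4 / 3) ht).mul_left (-(3 / (4 * t)))).congr_fun
      fun i => ?_
    rw [sinArcsinCoeff_four_thirds_odd, div_pow, ← pow_mul]
    field_simp
    ring
end
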